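/- arXiv:2509.17215 — 2 statements merged into one kernel-verified Lean document; each statement's English description precedes it below -/
import Mathlib

section
/- For the Laguerre recursion L(k+1) = A_l L(k), the matrix A_l satisfies ∑_{k=0}^{∞} L(k) L(k)ᵀ = I_N, i.e., the infinite sum of outer products of the Laguerre state vectors equals the identity matrix (this is the matrix form of the orthonormality of the Laguerre functions). -/
/-!
With `β = 1 - α²`, the rows of the block matrix `[A_l | L(0)]` are orthonormal, i.e.
`A_l A_lᵀ + L(0) L(0)ᵀ = I`; entrywise this is a finite geometric sum in `α²`.
Conjugating by `A_lᵏ` and telescoping gives `∑_{k<n} L(k) L(k)ᵀ = I - A_lⁿ (A_lⁿ)ᵀ`.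
Since `A_l = α I + (strictly lower triangular)`, the binomial expansion of `A_lⁿ` has boundedly
many terms, each `O(nᵐ αⁿ)`, so `A_lⁿ → 0`. The partial sums therefore converge to `I`, and a
series of outer products `u uᵀ` with convergent partial sums is summable: its diagonal entries are
nonnegative and dominate the off-diagonal ones.
-/

open Matrix Filter Finset Topology

section OuterProducts

variable {n : Type*}

theorem vecMulVec_mulVec_self [Fintype n] {R : Type*} [CommSemiring R] (M : Matrix n n R)
    (v : n → R) :
    vecMulVec (M *ᵥ v) (M *ᵥ v) = M * vecMulVec v v * Mᵀ := by
  rw [mul_vecMulVec, vecMulVec_mul, vecMul_transpose]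

theorem sum_range_vecMulVec_pow_mulVec [Fintype n] {R : Type*} [CommRing R] [DecidableEq n]
    {A : Matrix n n R} {v : n → R} (hA : A * Aᵀ + vecMulVec v v = 1) (m : ℕ) :
    ∑ k ∈ range m, vecMulVec (A ^ k *ᵥ v) (A ^ k *ᵥ v) = 1 - A ^ m * (A ^ m)ᵀ := by
  have hv : vecMulVec v v = 1 - A * Aᵀ := eq_sub_of_add_eq' hA
  induction m with
  | zero => simp
  | succ m ih =>
    rw [sum_range_succ, ih, vecMulVec_mulVec_self, hv, pow_succ, transpose_mul]
    noncomm_ring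

theorem summable_vecMulVec_self_of_tendsto {u : ℕ → n → ℝ} {S : Matrix n n ℝ}
    (hS : Tendsto (fun m ↦ ∑ k ∈ range m, vecMulVec (u k) (u k)) atTop (𝓝 S)) :
    Summable (fun k ↦ vecMulVec (u k) (u k)) := by
  have hdiag (i : n) : Summable (fun k ↦ u k i ^ 2) := by
    refine ⟨S i i, (hasSum_iff_tendsto_nat_of_nonneg (fun k ↦ sq_nonneg _) _).mpr ?_⟩
    simpa only [Matrix.sum_apply, vecMulVec_apply, sq] using (hS.apply_nhds i).apply_nhds i
  refine Pi.summable.mpr fun i ↦ Pi.summable.mpr fun j ↦ ?_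
  refine Summable.of_norm_bounded (((hdiag i).add (hdiag j)).div_const 2) fun k ↦ ?_
  rw [vecMulVec_apply, Real.norm_eq_abs, abs_mul, le_div_iff₀ two_pos]
  nlinarith [sq_nonneg (|u k i| - |u k j|), sq_abs (u k i), sq_abs (u k j)]

theorem hasSum_vecMulVec_pow_mulVec [Fintype n] [DecidableEq n] {A : Matrix n n ℝ} {v : n → ℝ}
    (hA : A * Aᵀ + vecMulVec v v = 1) (hpow : Tendsto (A ^ ·) atTop (𝓝 0)) :
    HasSum (fun k ↦ vecMulVec (A ^ k *ᵥ v) (A ^ k *ᵥ v)) 1 := by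
  have hrem : Tendsto (fun m ↦ A ^ m * (A ^ m)ᵀ) atTop (𝓝 0) := by
    have hcont : Continuous fun M : Matrix n n ℝ ↦ M * Mᵀ :=
      continuous_id.matrix_mul continuous_id.matrix_transpose
    simpa [Function.comp_def] using (hcont.tendsto' 0 0 (by simp)).comp hpow
  have hpartial := (tendsto_const_nhds (x := (1 : Matrix n n ℝ))).sub hrem
  rw [sub_zero, ← funext (sum_range_vecMulVec_pow_mulVec hA)] at hpartial
  exact ((summable_vecMulVec_self_of_tendsto hpartial).hasSum_iff_tendsto_nat).mpr hpartial

end OuterProducts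

theorem tendsto_choose_mul_pow_sub {c : ℝ} (hc : |c| < 1) (m : ℕ) :
    Tendsto (fun k ↦ (k.choose m : ℝ) * c ^ (k - m)) atTop (𝓝 0) := by
  refine (tendsto_add_atTop_iff_nat m).mp ?_
  simpa using (summable_choose_mul_geometric_of_norm_lt_one m (r := c) hc).tendsto_atTop_zero

theorem tendsto_pow_add_algebraMap_of_isNilpotent {A : Type*} [Ring A] [TopologicalSpace A]
    [IsTopologicalRing A] [Algebra ℝ A] [ContinuousSMul ℝ A] {c : ℝ} (hc : |c| < 1) {x : A}
    (hx : IsNilpotent x) : Tendsto (fun k ↦ (x + algebraMap ℝ A c) ^ k) atTop (𝓝 0) := by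
  obtain ⟨p, hp⟩ := hx
  have hexpand : ∀ k, p ≤ k →
      (x + algebraMap ℝ A c) ^ k = ∑ m ∈ range p, ((k.choose m : ℝ) * c ^ (k - m)) • x ^ m := by
    intro k hk
    rw [(Algebra.commute_algebraMap_right c x).add_pow,
      ← sum_subset (range_subset_range.mpr (by omega : p ≤ k + 1))]
    · refine sum_congr rfl fun m _ ↦ ?_
      rw [Algebra.smul_def, map_mul, map_pow, map_natCast, (Nat.cast_commute _ _).eq, mul_assoc]
      exact (((Algebra.commute_algebraMap_right c x).pow_pow _ _).mul_right
        (Nat.commute_cast _ _)).eq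
    · intro m _ hm
      rw [pow_eq_zero_of_le (by simpa using hm) hp, zero_mul, zero_mul]
  have hlim : Tendsto (fun k ↦ ∑ m ∈ range p, ((k.choose m : ℝ) * c ^ (k - m)) • x ^ m)
      atTop (𝓝 0) := by
    simpa using tendsto_finsetSum (range p) fun m _ ↦
      (tendsto_choose_mul_pow_sub hc m).smul_const (x ^ m)
  exact hlim.congr' (eventually_atTop.mpr ⟨p, fun k hk ↦ (hexpand k hk).symm⟩)

theorem pow_apply_eq_zero_of_strictLower {R : Type*} [Semiring R] {N : ℕ}
    {M : Matrix (Fin N) (Fin N) R} (hM : ∀ i j, i ≤ j → M i j = 0) (p : ℕ) {i j : Fin N}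
    (hij : (i : ℕ) < j + p) : (M ^ p) i j = 0 := by
  induction p generalizing i with
  | zero => simp [one_apply_ne (Fin.ne_of_lt (by simpa using hij))]
  | succ p ih =>
    rw [pow_succ', mul_apply]
    refine sum_eq_zero fun k _ ↦ ?_
    rcases le_or_gt i k with hik | hki
    · rw [hM i k hik, zero_mul]
    · rw [ih (by omega), mul_zero]

theorem isNilpotent_of_strictLower {R : Type*} [Semiring R] {N : ℕ}
    {M : Matrix (Fin N) (Fin N) R} (hM : ∀ i j, i ≤ j → M i j = 0) : IsNilpotent M :=
  ⟨N, ext fun i j ↦ pow_apply_eq_zero_of_strictLower hM N (by omega)⟩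

/-- The entry `(i, k)` of `A_l`, indexed by `ℕ` and with `β = 1 - α²`. -/
def laguerreEntry (α : ℝ) (i k : ℕ) : ℝ :=
  if i = k then α else if k < i then (-α) ^ (i - k - 1) * (1 - α ^ 2) else 0

theorem laguerreEntry_of_lt {α : ℝ} {i k : ℕ} (h : i < k) : laguerreEntry α i k = 0 := by
  simp [laguerreEntry, h.ne, h.not_gt]

theorem laguerreEntry_add_mul_laguerreEntry {α : ℝ} {j k : ℕ} (d : ℕ) (hk : k < j) :
    laguerreEntry α (j + d) k * laguerreEntry α j k
      = (1 - α ^ 2) ^ 2 * (-α) ^ d * (α ^ 2) ^ (j - 1 - k) := by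
  have hexp : j + d - k - 1 = d + (j - 1 - k) := by omega
  simp only [laguerreEntry, if_neg (by omega : j + d ≠ k), if_neg hk.ne', if_pos hk,
    if_pos (by omega : k < j + d), hexp, (by omega : j - k - 1 = j - 1 - k)]
  have hsq : (α ^ 2) ^ (j - 1 - k) = (-α) ^ (j - 1 - k) * (-α) ^ (j - 1 - k) := by
    rw [← mul_pow, neg_mul_neg, sq]
  rw [hsq, pow_add]
  ring

theorem sum_laguerreEntry_mul_laguerreEntry (α : ℝ) {i j : ℕ} (hji : j ≤ i) :
    ∑ k ∈ range (j + 1), laguerreEntry α i k * laguerreEntry α j k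
      + (1 - α ^ 2) * (-α) ^ (i + j) = if i = j then 1 else 0 := by
  obtain ⟨d, rfl⟩ := Nat.exists_eq_add_of_le hji
  have hgeom : ∑ k ∈ range j, laguerreEntry α (j + d) k * laguerreEntry α j k
      = (1 - α ^ 2) * (-α) ^ d * (1 - (α ^ 2) ^ j) := by
    rw [sum_congr rfl fun k hk ↦ laguerreEntry_add_mul_laguerreEntry d (mem_range.mp hk),
      sum_range_reflect (fun t ↦ (1 - α ^ 2) ^ 2 * (-α) ^ d * (α ^ 2) ^ t) j, ← mul_sum,
      ← mul_neg_geom_sum (α ^ 2) j]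
    ring
  have hpow : (-α) ^ (j + d + j) = (-α) ^ d * (α ^ 2) ^ j := by
    rw [← neg_sq α, ← pow_mul]
    ring
  rw [sum_range_succ, hgeom, hpow]
  rcases d with _ | e
  · simp only [laguerreEntry, add_zero, if_true, pow_zero]
    ring
  · simp only [laguerreEntry, if_neg (by omega : j + (e + 1) ≠ j),
      if_pos (by omega : j < j + (e + 1)), (by omega : j + (e + 1) - j - 1 = e), if_true]
    ring

theorem mul_transpose_add_vecMulVec_eq_one_of_laguerreEntry {N : ℕ} {α : ℝ} (hα : α ^ 2 ≤ 1)
    {A : Matrix (Fin N) (Fin N) ℝ} (hA : ∀ i j, A i j = laguerreEntry α i j) {l : Fin N → ℝ}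
    (hl : ∀ i, l i = √(1 - α ^ 2) * (-α) ^ (i : ℕ)) :
    A * Aᵀ + vecMulVec l l = 1 := by
  have hlower (i j : Fin N) (hji : j ≤ i) :
      (A * Aᵀ + vecMulVec l l) i j = (1 : Matrix _ _ ℝ) i j := by
    have hl2 : l i * l j = (1 - α ^ 2) * (-α) ^ ((i : ℕ) + j) := by
      rw [hl, hl, pow_add, mul_mul_mul_comm, Real.mul_self_sqrt (by linarith)]
    have htrunc : ∑ k : Fin N, A i k * A j k
        = ∑ k ∈ range (j + 1), laguerreEntry α i k * laguerreEntry α j k := by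
      simp only [hA]
      rw [Fin.sum_univ_eq_sum_range (fun k ↦ laguerreEntry α i k * laguerreEntry α j k) N]
      refine (sum_subset (range_subset_range.mpr j.isLt) fun k _ hk ↦ ?_).symm
      rw [laguerreEntry_of_lt (i := j) (by simpa using hk), mul_zero]
    rw [Matrix.add_apply, mul_apply, vecMulVec_apply, one_apply]
    simp only [transpose_apply]
    rw [htrunc, hl2, sum_laguerreEntry_mul_laguerreEntry α hji]
    simp only [Fin.val_inj]
  have hsymm : (A * Aᵀ + vecMulVec l l).IsSymm :=
    (isSymm_mul_transpose_self A).add (transpose_vecMulVec l l)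
  ext i j
  rcases le_total j i with hji | hij
  · exact hlower i j hji
  · rw [← hsymm.apply, hlower j i hij, isSymm_one.apply]

theorem tendsto_pow_of_laguerreEntry {N : ℕ} {α : ℝ} (hα : |α| < 1)
    {A : Matrix (Fin N) (Fin N) ℝ} (hA : ∀ i j, A i j = laguerreEntry α i j) :
    Tendsto (A ^ ·) atTop (𝓝 0) := by
  have hstrict : ∀ i j, i ≤ j → (A - algebraMap ℝ _ α) i j = 0 := by
    intro i j hij
    rcases hij.eq_or_lt with rfl | hlt
    · simp [hA, laguerreEntry, algebraMap_matrix_apply]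
    · simp [hA, laguerreEntry_of_lt (Fin.lt_def.mp hlt), algebraMap_matrix_apply, hlt.ne]
  simpa using tendsto_pow_add_algebraMap_of_isNilpotent hα (isNilpotent_of_strictLower hstrict)

/-- Matrix form of the orthonormality of the Laguerre functions: with `0 ≤ α < 1`,
`β = 1 - α²`, `L(k) = A_lᵏ L(0)`, the infinite sum of outer products
`∑_{k=0}^∞ L(k) L(k)ᵀ` equals the identity matrix `I_N`. -/
theorem stmt_9 {N : ℕ} (α β : ℝ) (hα0 : 0 ≤ α) (hα1 : α < 1) (hβ : β = 1 - α ^ 2)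
    (Al : Matrix (Fin N) (Fin N) ℝ)
    (hAl : ∀ i j : Fin N, Al i j =
      if i = j then α else if (j : ℕ) < (i : ℕ) then (-α) ^ ((i : ℕ) - (j : ℕ) - 1) * β else 0)
    (L0 : Fin N → ℝ) (hL0 : ∀ i : Fin N, L0 i = Real.sqrt β * (-α) ^ (i : ℕ)) :
    HasSum (fun k : ℕ => vecMulVec ((Al ^ k).mulVec L0) ((Al ^ k).mulVec L0))
      (1 : Matrix (Fin N) (Fin N) ℝ) := by
  subst hβ
  have hA (i j : Fin N) : Al i j = laguerreEntry α i j := by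
    rw [hAl]
    simp only [laguerreEntry, Fin.val_inj]
  exact hasSum_vecMulVec_pow_mulVec
    (mul_transpose_add_vecMulVec_eq_one_of_laguerreEntry (by nlinarith) hA hL0)
    (tendsto_pow_of_laguerreEntry (abs_lt.mpr ⟨by linarith, hα1⟩) hA)
end

section
/- For the deterministic scalar PSO dynamics with constant parameters, the update (x, v) ↦ (x + ωv + φ(p - x), ωv + φ(p - x)), where φ = c₁r₁ + c₂r₂ > 0 and p is the (fixed) attraction point, is a linear map whose eigenvalues λ satisfy λ² - (1 + ω - φ)λ + ω = 0; the iteration converges to (p, 0) for every initial condition if and only if |ω| < 1 and 0 < φ < 2(1 + ω). -/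
open Matrix Polynomial Filter Topology ComplexConjugate

/-!
Writing `e k = x k - p`, the PSO iterates satisfy `e (k + 2) = t e (k + 1) - ω e k` with
`t = 1 + ω - φ`, and `v (k + 1) = e (k + 1) - e k`, so convergence to `(p, 0)` means `e → 0`.
If the roots `a, b` of `z² - t z + ω` lie in the unit disk, then
`e (k + 1) - b e k = aᵏ (e 1 - b e 0)` tends to `0`, and so does `e`, since
`e (k + 1) = b e k + o(1)` with `‖b‖ < 1`. Conversely, the Casoratian of two solutions is
multiplied by `ω` at each step, and for the trajectories started at `(p + 1, 1)` and `(p, 1)`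
it equals `ω` at time `0`, which forces `|ω| < 1`; and if `φ ≥ 2 (1 + ω)` there is a real root
`a ≤ -1`, along which the trajectory started at `(p + 1, 1)` grows like `a ^ (k + 1)`.
-/

def SolvesRec {R : Type*} [Ring R] (t d : R) (u : ℕ → R) : Prop :=
  ∀ k, u (k + 2) = t * u (k + 1) - d * u k

theorem tendsto_zero_of_tendsto_succ_sub_mul {R : Type*} [NormedRing R] {u : ℕ → R} {a : R}
    (ha : ‖a‖ < 1) (h : Tendsto (fun k => u (k + 1) - a * u k) atTop (𝓝 0)) :
    Tendsto u atTop (𝓝 0) := by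
  rw [NormedAddGroup.tendsto_nhds_zero] at h ⊢
  intro ε hε
  set r := ‖a‖
  have hr : 0 ≤ r := norm_nonneg a
  obtain ⟨N, hN⟩ := eventually_atTop.1 (h ((1 - r) * (ε / 2)) (by nlinarith))
  have contract : ∀ k ≥ N, ‖u (k + 1)‖ - ε / 2 ≤ r * (‖u k‖ - ε / 2) := fun k hk => by
    have := norm_le_insert' (u (k + 1)) (a * u k)
    nlinarith [norm_mul_le a (u k), hN k hk]
  have geom : ∀ m, ‖u (N + m)‖ - ε / 2 ≤ r ^ m * (‖u N‖ - ε / 2) := by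
    intro m
    induction m with
    | zero => simp
    | succ m ih =>
      calc ‖u (N + m + 1)‖ - ε / 2 ≤ r * (‖u (N + m)‖ - ε / 2) := contract _ (by omega)
        _ ≤ r * (r ^ m * (‖u N‖ - ε / 2)) := mul_le_mul_of_nonneg_left ih hr
        _ = r ^ (m + 1) * (‖u N‖ - ε / 2) := by ring
  have hsmall : ∀ᶠ m in atTop, r ^ m * (‖u N‖ - ε / 2) < ε / 2 := by
    have := (tendsto_pow_atTop_nhds_zero_of_lt_one hr ha).mul_const (‖u N‖ - ε / 2)
    rw [zero_mul] at this
    exact this.eventually (gt_mem_nhds (by positivity))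
  obtain ⟨M, hM⟩ := eventually_atTop.1 hsmall
  refine eventually_atTop.2 ⟨N + M, fun k hk => ?_⟩
  obtain ⟨m, rfl⟩ := Nat.exists_eq_add_of_le (le_of_add_le_left hk)
  linarith [geom m, hM m (by omega)]

theorem exists_roots_norm_lt_one {t d : ℝ} (hd : |d| < 1) (ht : |t| < 1 + d) :
    ∃ a b : ℂ, a + b = t ∧ a * b = d ∧ ‖a‖ < 1 ∧ ‖b‖ < 1 := by
  rcases le_or_gt 0 (t ^ 2 - 4 * d) with hΔ | hΔ
  · set s := √(t ^ 2 - 4 * d)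
    have hs : s ^ 2 = t ^ 2 - 4 * d := Real.sq_sqrt hΔ
    have hs_lt : s < 2 - |t| :=
      (Real.sqrt_lt' (by linarith [abs_lt.1 hd])).2 (by nlinarith [sq_abs t])
    have hs_nonneg : 0 ≤ s := Real.sqrt_nonneg _
    refine ⟨((t + s) / 2 : ℝ), ((t - s) / 2 : ℝ), by push_cast; ring, ?_, ?_, ?_⟩
    · rw [← Complex.ofReal_mul]
      congr 1
      linear_combination -hs / 4
    all_goals
      rw [Complex.norm_real, Real.norm_eq_abs, abs_lt]
      constructor <;> linarith [le_abs_self t, neg_abs_le t]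
  · set s := √(4 * d - t ^ 2)
    have hs : s ^ 2 = 4 * d - t ^ 2 := Real.sq_sqrt (by linarith)
    set z : ℂ := ⟨t / 2, s / 2⟩
    have hz : ‖z‖ ^ 2 = d := by
      rw [Complex.sq_norm, Complex.normSq_mk]
      linear_combination hs / 4
    have hz_lt : ‖z‖ < 1 :=
      (sq_lt_one_iff₀ (norm_nonneg z)).1 (hz ▸ (abs_lt.1 hd).2)
    refine ⟨z, conj z, ?_, ?_, hz_lt, (Complex.norm_conj z).symm ▸ hz_lt⟩
    · rw [Complex.add_conj]
      simp [z]
      ring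
    · rw [Complex.mul_conj, ← Complex.sq_norm, hz]

theorem exists_roots_le_neg_one {t d : ℝ} (h : 1 + t + d ≤ 0) :
    ∃ a b : ℝ, a + b = t ∧ a * b = d ∧ a ≤ -1 := by
  have hΔ : 0 ≤ t ^ 2 - 4 * d := by nlinarith [sq_nonneg (1 - d), sq_nonneg (t + 1 + d)]
  set s := √(t ^ 2 - 4 * d)
  have hs : s ^ 2 = t ^ 2 - 4 * d := Real.sq_sqrt hΔ
  have hs_ge : t + 2 ≤ s := by
    rcases le_or_gt (t + 2) 0 with h2 | h2
    · exact h2.trans (Real.sqrt_nonneg _)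
    · exact (Real.le_sqrt' h2).2 (by nlinarith)
  exact ⟨(t - s) / 2, (t + s) / 2, by ring, by linear_combination -hs / 4, by linarith⟩

namespace SolvesRec

section CommRing

variable {R : Type*} [CommRing R] {t d : R} {u : ℕ → R}

theorem map {S : Type*} [CommRing S] (g : R →+* S) (hu : SolvesRec t d u) :
    SolvesRec (g t) (g d) (fun k => g (u k)) := fun k => by
  simp [hu k]

theorem sub_mul_eq_pow_mul {a b : R} (hu : SolvesRec (a + b) (a * b) u) (k : ℕ) :
    u (k + 1) - b * u k = a ^ k * (u 1 - b * u 0) := by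
  induction k with
  | zero => simp
  | succ k ih => linear_combination hu k + a * ih

theorem casoratian_eq {v : ℕ → R} (hu : SolvesRec t d u) (hv : SolvesRec t d v) (k : ℕ) :
    u k * v (k + 1) - u (k + 1) * v k = d ^ k * (u 0 * v 1 - u 1 * v 0) := by
  induction k with
  | zero => simp
  | succ k ih => linear_combination u (k + 1) * hv k - v (k + 1) * hu k + d * ih

theorem tendsto_pow_mul_casoratian [TopologicalSpace R] [IsTopologicalRing R] {v : ℕ → R}
    (hu : SolvesRec t d u) (hv : SolvesRec t d v)
    (hu0 : Tendsto u atTop (𝓝 0)) (hv0 : Tendsto v atTop (𝓝 0)) :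
    Tendsto (fun k => d ^ k * (u 0 * v 1 - u 1 * v 0)) atTop (𝓝 0) := by
  have := (hu0.mul (hv0.comp (tendsto_add_atTop_nat 1))).sub
    ((hu0.comp (tendsto_add_atTop_nat 1)).mul hv0)
  rw [mul_zero, sub_zero] at this
  exact this.congr (casoratian_eq hu hv)

end CommRing

theorem tendsto_zero_of_norm_lt_one {R : Type*} [NormedCommRing R] {u : ℕ → R} {a b : R}
    (hu : SolvesRec (a + b) (a * b) u) (ha : ‖a‖ < 1) (hb : ‖b‖ < 1) :
    Tendsto u atTop (𝓝 0) := by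
  refine tendsto_zero_of_tendsto_succ_sub_mul hb ?_
  have := (tendsto_pow_atTop_nhds_zero_of_norm_lt_one ha).mul_const (u 1 - b * u 0)
  rw [zero_mul] at this
  exact this.congr fun k => (hu.sub_mul_eq_pow_mul k).symm

variable {t d : ℝ} {u : ℕ → ℝ}

theorem tendsto_zero (hu : SolvesRec t d u) (hd : |d| < 1) (ht : |t| < 1 + d) :
    Tendsto u atTop (𝓝 0) := by
  obtain ⟨a, b, hab, hab', ha, hb⟩ := exists_roots_norm_lt_one hd ht
  have hc : SolvesRec (a + b) (a * b) (fun k => (u k : ℂ)) := by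
    simpa [hab, hab'] using hu.map Complex.ofRealHom
  have := hc.tendsto_zero_of_norm_lt_one ha hb
  rw [tendsto_zero_iff_norm_tendsto_zero] at this ⊢
  simpa using this

theorem one_add_add_pos (hu : SolvesRec t d u) (h0 : u 0 = 1) (h1 : u 1 = t)
    (hlim : Tendsto u atTop (𝓝 0)) : 0 < 1 + t + d := by
  by_contra! h
  obtain ⟨a, b, rfl, rfl, ha⟩ := exists_roots_le_neg_one h
  have hgeom : Tendsto (fun k => a ^ (k + 1)) atTop (𝓝 0) := by
    have := (hlim.comp (tendsto_add_atTop_nat 1)).sub (hlim.const_mul b)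
    rw [mul_zero, sub_zero] at this
    refine this.congr fun k => ?_
    rw [Function.comp_apply, hu.sub_mul_eq_pow_mul, h0, h1]
    ring
  have := tendsto_pow_atTop_nhds_zero_iff.1 ((tendsto_add_atTop_iff_nat 1).1 hgeom)
  linarith [abs_lt.1 this]

end SolvesRec

section PSO

variable {ω φ p : ℝ} {f : ℝ × ℝ → ℝ × ℝ}

theorem pso_solvesRec
    (hf : ∀ s : ℝ × ℝ, f s = (s.1 + ω * s.2 + φ * (p - s.1), ω * s.2 + φ * (p - s.1)))
    (s : ℝ × ℝ) : SolvesRec (1 + ω - φ) ω (fun k => (f^[k] s).1 - p) := fun k => by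
  simp only [Function.iterate_succ_apply', hf]
  ring

theorem pso_fst_one
    (hf : ∀ s : ℝ × ℝ, f s = (s.1 + ω * s.2 + φ * (p - s.1), ω * s.2 + φ * (p - s.1)))
    (x₀ v₀ : ℝ) : (f^[1] (x₀, v₀)).1 - p = (1 - φ) * (x₀ - p) + ω * v₀ := by
  rw [Function.iterate_one, hf]
  ring

theorem pso_snd_succ
    (hf : ∀ s : ℝ × ℝ, f s = (s.1 + ω * s.2 + φ * (p - s.1), ω * s.2 + φ * (p - s.1)))
    (s : ℝ × ℝ) (k : ℕ) : (f^[k + 1] s).2 = (f^[k + 1] s).1 - (f^[k] s).1 := by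
  rw [Function.iterate_succ_apply', hf]
  ring

theorem pso_tendsto_iff
    (hf : ∀ s : ℝ × ℝ, f s = (s.1 + ω * s.2 + φ * (p - s.1), ω * s.2 + φ * (p - s.1)))
    (s : ℝ × ℝ) :
    Tendsto (fun k => f^[k] s) atTop (𝓝 (p, 0)) ↔
      Tendsto (fun k => (f^[k] s).1 - p) atTop (𝓝 0) := by
  rw [nhds_prod_eq, tendsto_prod_iff', tendsto_sub_nhds_zero_iff]
  refine ⟨And.left, fun h => ⟨h, (tendsto_add_atTop_iff_nat 1).1 ?_⟩⟩
  have := (h.comp (tendsto_add_atTop_nat 1)).sub h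
  rw [sub_self] at this
  refine this.congr fun k => ?_
  rw [Function.comp_apply, pso_snd_succ hf]

end PSO

/-- Deterministic scalar PSO `(x,v) ↦ (x + ωv + φ(p-x), ωv + φ(p-x))` with `φ > 0`:
the linear part has characteristic polynomial `λ² - (1+ω-φ)λ + ω`, and the iteration
converges to `(p, 0)` from every initial condition iff `|ω| < 1` and `0 < φ < 2(1+ω)`. -/
theorem stmt_16 (ω φ p : ℝ) (hφ : 0 < φ)
    (f : ℝ × ℝ → ℝ × ℝ)
    (hf : ∀ s : ℝ × ℝ, f s = (s.1 + ω * s.2 + φ * (p - s.1), ω * s.2 + φ * (p - s.1))) :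
    (Matrix.charpoly (!![1 - φ, ω; -φ, ω] : Matrix (Fin 2) (Fin 2) ℝ) =
        X ^ 2 - C (1 + ω - φ) * X + C ω) ∧
      ((∀ x0 v0 : ℝ, Tendsto (fun k : ℕ => f^[k] (x0, v0)) atTop (nhds (p, 0))) ↔
        (|ω| < 1 ∧ 0 < φ ∧ φ < 2 * (1 + ω))) := by
  refine ⟨?_, ⟨fun h => ?_, fun ⟨hω, _, hφω⟩ x₀ v₀ => ?_⟩⟩
  · rw [charpoly_fin_two, trace_fin_two_of, det_fin_two_of]
    ring_nf
  · have hlim s := (pso_tendsto_iff hf s).1 (h s.1 s.2)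
    have hω : |ω| < 1 := by
      have hcas := (pso_solvesRec hf (p + 1, 1)).tendsto_pow_mul_casoratian
        (pso_solvesRec hf (p, 1)) (hlim _) (hlim _)
      rw [← tendsto_pow_atTop_nhds_zero_iff, ← tendsto_add_atTop_iff_nat 1]
      refine hcas.congr fun k => ?_
      simp only [pso_fst_one hf, Function.iterate_zero_apply]
      ring
    have hpos := (pso_solvesRec hf (p + 1, 1)).one_add_add_pos (by simp)
      (by rw [pso_fst_one hf]; ring) (hlim _)
    exact ⟨hω, hφ, by linarith⟩
  · refine (pso_tendsto_iff hf _).2 ((pso_solvesRec hf _).tendsto_zero hω ?_)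
    rw [abs_lt]
    constructor <;> linarith
end
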